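/- Let (G,Ω) be an abundant transitive ℓ-permutation group whose spine 𝔎 has no minimal element. Then for every Δ ∈ T and h ∈ Q_Δ there is h' ∈ rst(Δ) such that 1 ≠ C²_G(W_{h'}) ⊊ C²_G(W_h). -/
import Mathlib


/-!  Common framework for ℓ-permutation groups on a totally ordered set. -/

namespace LPerm

variable {Ω : Type*} [LinearOrder Ω]

/-- Pointwise join of two order automorphisms of a totally ordered set. -/
def autSup (f g : Ω ≃o Ω) : Ω ≃o Ω :=
  Equiv.toOrderIso
    { toFun := fun α => max (f α) (g α)
      invFun := fun α => min (f.symm α) (g.symm α)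
      left_inv := by
        intro α
        dsimp only
        rcases le_total (f α) (g α) with h | h
        · rw [max_eq_right h]
          have h1 : α ≤ f.symm (g α) := by
            have := f.symm.monotone h
            simpa using this
          rw [g.symm_apply_apply, min_eq_right h1]
        · rw [max_eq_left h]
          have h1 : α ≤ g.symm (f α) := by
            have := g.symm.monotone h
            simpa using this
          rw [f.symm_apply_apply, min_eq_left h1]
      right_inv := by
        intro α
        dsimp only
        rcases le_total (f.symm α) (g.symm α) with h | h
        · rw [min_eq_left h]
          have h1 : g (f.symm α) ≤ α := by
            have := g.monotone h
            simpa using this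
          rw [f.apply_symm_apply, max_eq_left h1]
        · rw [min_eq_right h]
          have h1 : f (g.symm α) ≤ α := by
            have := f.monotone h
            simpa using this
          rw [g.apply_symm_apply, max_eq_right h1] }
    (f.monotone.max g.monotone)
    (f.symm.monotone.min g.symm.monotone)

/-- Pointwise meet of two order automorphisms of a totally ordered set. -/
def autInf (f g : Ω ≃o Ω) : Ω ≃o Ω :=
  Equiv.toOrderIso
    { toFun := fun α => min (f α) (g α)
      invFun := fun α => max (f.symm α) (g.symm α)
      left_inv := by
        intro α
        dsimp only
        rcases le_total (f α) (g α) with h | h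
        · rw [min_eq_left h]
          have h1 : g.symm (f α) ≤ α := by
            have := g.symm.monotone h
            simpa using this
          rw [f.symm_apply_apply, max_eq_left h1]
        · rw [min_eq_right h]
          have h1 : f.symm (g α) ≤ α := by
            have := f.symm.monotone h
            simpa using this
          rw [g.symm_apply_apply, max_eq_right h1]
      right_inv := by
        intro α
        dsimp only
        rcases le_total (f.symm α) (g.symm α) with h | h
        · rw [max_eq_right h]
          have h1 : α ≤ f (g.symm α) := by
            have := f.monotone h
            simpa using this
          rw [g.apply_symm_apply, min_eq_right h1]
        · rw [max_eq_left h]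
          have h1 : α ≤ g (f.symm α) := by
            have := g.monotone h
            simpa using this
          rw [f.apply_symm_apply, min_eq_left h1] }
    (f.monotone.min g.monotone)
    (f.symm.monotone.max g.symm.monotone)


/-- The pointwise order on order automorphisms: `f ≤ g` iff `f α ≤ g α` for all `α`. -/
def autLe (f g : Ω ≃o Ω) : Prop := ∀ α : Ω, f α ≤ g α

/-- `|g| = g ∨ g⁻¹`. -/
def autAbs (g : Ω ≃o Ω) : Ω ≃o Ω := autSup g g⁻¹

/-- The support of an automorphism. -/
def supp (g : Ω ≃o Ω) : Set Ω := {α | g α ≠ α}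

/-- Conjugation, written `h^g = g⁻¹ h g` in the paper. -/
def aconj (h g : Ω ≃o Ω) : Ω ≃o Ω := g⁻¹ * h * g

/-- The commutator `[a,b] = a⁻¹ b⁻¹ a b`. -/
def pcomm (a b : Ω ≃o Ω) : Ω ≃o Ω := a⁻¹ * b⁻¹ * a * b

/-- `G` is closed under the pointwise lattice operations, i.e. `(G,Ω)` is an
ℓ-permutation group. -/
def SublatticeClosed (G : Subgroup (Ω ≃o Ω)) : Prop :=
  ∀ f g : Ω ≃o Ω, f ∈ G → g ∈ G → autSup f g ∈ G ∧ autInf f g ∈ G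

/-- `(G,Ω)` is transitive. -/
def IsTransitive (G : Subgroup (Ω ≃o Ω)) : Prop :=
  ∀ α β : Ω, ∃ g ∈ G, g α = β

/-- `(G,Ω)` is o-2 transitive. -/
def IsO2Transitive (G : Subgroup (Ω ≃o Ω)) : Prop :=
  ∀ α₁ α₂ β₁ β₂ : Ω, α₁ < α₂ → β₁ < β₂ → ∃ g ∈ G, g α₁ = β₁ ∧ g α₂ = β₂

/-- A convex `G`-congruence: an equivalence relation with convex classes which is
preserved by the action of `G`. -/
def IsConvexCongruence (G : Subgroup (Ω ≃o Ω)) (r : Ω → Ω → Prop) : Prop :=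
  Equivalence r ∧ (∀ α β γ : Ω, r α γ → α ≤ β → β ≤ γ → r α β) ∧
    ∀ g ∈ G, ∀ α β : Ω, r α β → r (g α) (g β)

/-- `V(α,β)`: the intersection of all convex `G`-congruences under which `α` and `β`
are equivalent. -/
def Vcong (G : Subgroup (Ω ≃o Ω)) (α β : Ω) : Ω → Ω → Prop :=
  fun γ δ => ∀ r : Ω → Ω → Prop, IsConvexCongruence G r → r α β → r γ δ

/-- Membership in the spine `𝔎` of `(G,Ω)`. -/
def SpineMem (G : Subgroup (Ω ≃o Ω)) (r : Ω → Ω → Prop) : Prop :=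
  ∃ α β : Ω, α ≠ β ∧ r = Vcong G α β

/-- Inclusion of relations. -/
def relLe (r s : Ω → Ω → Prop) : Prop := ∀ x y : Ω, r x y → s x y

/-- `Δ ∈ T`: `Δ` is an o-block (class) of a member of the spine `𝔎`. -/
def InT (G : Subgroup (Ω ≃o Ω)) (Δ : Set Ω) : Prop :=
  ∃ r : Ω → Ω → Prop, SpineMem G r ∧ ∃ δ : Ω, Δ = {γ | r δ γ}

/-- `Δ` is a class (o-block) of the relation `r`. -/
def IsBlockOf (r : Ω → Ω → Prop) (Δ : Set Ω) : Prop :=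
  ∃ δ : Ω, Δ = {γ | r δ γ}

/-- The restricted stabiliser `rst(S) = {g ∈ G ∣ supp g ⊆ S}`. -/
def rst (G : Subgroup (Ω ≃o Ω)) (S : Set Ω) : Set (Ω ≃o Ω) :=
  {g | g ∈ G ∧ supp g ⊆ S}

/-- The (setwise) stabiliser `st(Δ) = {g ∈ G ∣ Δg = Δ}`. -/
def stab (G : Subgroup (Ω ≃o Ω)) (Δ : Set Ω) : Set (Ω ≃o Ω) :=
  {g | g ∈ G ∧ g '' Δ = Δ}

/-- `Q_Δ = {h ∈ rst(Δ) ∣ ∃ α ∈ Δ, V(α, αh) = κ(Δ)}`; since `κ(Δ)` is the unique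
convex congruence having `Δ` as a class, the condition `V(α,αh) = κ(Δ)` says exactly
that `Δ` is the class of `V(α, αh)` containing `α`. -/
def Qset (G : Subgroup (Ω ≃o Ω)) (Δ : Set Ω) : Set (Ω ≃o Ω) :=
  {h | h ∈ rst G Δ ∧ ∃ α ∈ Δ, Δ = {γ | Vcong G α (h α) α γ}}

/-- `(G,Ω)` is ample: `Q_Δ ≠ ∅` for every `Δ ∈ T`. -/
def Ample (G : Subgroup (Ω ≃o Ω)) : Prop :=
  ∀ Δ : Set Ω, InT G Δ → (Qset G Δ).Nonempty

/-- `(G,Ω)` is abundant: for every `Δ ∈ T` and `g ∈ st(Δ)`, the automorphism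
`dep(g,Δ)` agreeing with `g` on `Δ` and with the identity elsewhere lies in `G`. -/
def Abundant (G : Subgroup (Ω ≃o Ω)) : Prop :=
  ∀ Δ : Set Ω, InT G Δ → ∀ g ∈ stab G Δ,
    ∃ g₀ ∈ G, (∀ α ∈ Δ, g₀ α = g α) ∧ ∀ α ∉ Δ, g₀ α = α

/-- The spine `𝔎` has no minimal element. -/
def SpineNoMin (G : Subgroup (Ω ≃o Ω)) : Prop :=
  ∀ r : Ω → Ω → Prop, SpineMem G r →
    ∃ r' : Ω → Ω → Prop, SpineMem G r' ∧ relLe r' r ∧ r' ≠ r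

/-- `Δ` is a minimal element of `T`. -/
def MinimalInT (G : Subgroup (Ω ≃o Ω)) (Δ : Set Ω) : Prop :=
  InT G Δ ∧ ∀ Δ' : Set Ω, InT G Δ' → Δ' ⊆ Δ → Δ' = Δ

/-- Hypothesis (†): if `T` has a minimal element `Δ₀`, then every (nondegenerate
bounded) interval of `Δ₀` supports a non-trivial element of `G`. -/
def Dagger (G : Subgroup (Ω ≃o Ω)) : Prop :=
  ∀ Δ₀ : Set Ω, MinimalInT G Δ₀ → ∀ α β : Ω, α ∈ Δ₀ → β ∈ Δ₀ → α < β →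
    ∃ g : Ω ≃o Ω, g ∈ G ∧ g ≠ 1 ∧ supp g ⊆ Set.Ioo α β

/-- `X_h = {[h⁻¹, h^g] ∣ g ∈ G}`. -/
def Xset (G : Subgroup (Ω ≃o Ω)) (h : Ω ≃o Ω) : Set (Ω ≃o Ω) :=
  {x | ∃ g ∈ G, x = pcomm h⁻¹ (aconj h g)}

/-- `W_h = ⋃ {X_{h^g} ∣ g ∈ G, [X_h, X_{h^g}] ≠ 1}`. -/
def Wset (G : Subgroup (Ω ≃o Ω)) (h : Ω ≃o Ω) : Set (Ω ≃o Ω) :=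
  {x | ∃ g ∈ G, (∃ a ∈ Xset G h, ∃ b ∈ Xset G (aconj h g), pcomm a b ≠ 1) ∧
    x ∈ Xset G (aconj h g)}

/-- The centraliser of a subset `S` in `G`. -/
def cent (G : Subgroup (Ω ≃o Ω)) (S : Set (Ω ≃o Ω)) : Set (Ω ≃o Ω) :=
  {f | f ∈ G ∧ ∀ s ∈ S, s * f = f * s}

/-- The double centraliser of a subset `S` in `G`. -/
def cent2 (G : Subgroup (Ω ≃o Ω)) (S : Set (Ω ≃o Ω)) : Set (Ω ≃o Ω) :=
  cent G (cent G S)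

/-- The pointwise stabiliser in `G` of a subset `S ⊆ Ω`. -/
def ptStab (G : Subgroup (Ω ≃o Ω)) (S : Set Ω) : Set (Ω ≃o Ω) :=
  {f | f ∈ G ∧ ∀ α ∈ S, f α = α}

/-- The congruence covered by `K`: the union of all convex `G`-congruences properly
contained in `K`. -/
def coveredRel (G : Subgroup (Ω ≃o Ω)) (K : Ω → Ω → Prop) : Ω → Ω → Prop :=
  fun γ δ => ∃ r : Ω → Ω → Prop, IsConvexCongruence G r ∧ relLe r K ∧ r ≠ K ∧ r γ δ

/-- `Γ ∈ π(Δ)`, where `K = κ(Δ)`: `Γ` is a class of the congruence covered by `K`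
contained in `Δ`. -/
def InPi (G : Subgroup (Ω ≃o Ω)) (K : Ω → Ω → Prop) (Δ Γ : Set Ω) : Prop :=
  ∃ δ ∈ Δ, Γ = {γ | coveredRel G K δ γ}

/-- An irreducible element of `G`. -/
def IsIrreducibleElt (G : Subgroup (Ω ≃o Ω)) (g : Ω ≃o Ω) : Prop :=
  autLe 1 g ∧ g ≠ 1 ∧
    ∀ g₁ g₂ : Ω ≃o Ω, g₁ ∈ G → g₂ ∈ G → autSup g₁ g₂ = g → autInf g₁ g₂ = 1 →
      g₁ = 1 ∨ g₂ = 1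

/-- `(G,Ω)` is controlled. -/
def Controlled (G : Subgroup (Ω ≃o Ω)) : Prop :=
  ∀ Δ : Set Ω, InT G Δ → ¬ MinimalInT G Δ → ∀ g ∈ rst G Δ,
    (∃ δ ∈ Δ ∩ supp g, Δ = {γ | Vcong G δ (g δ) δ γ}) ∨
      ∃ Δ' : Set Ω, InT G Δ' ∧ supp g ⊆ Δ' ∧ Δ' ⊂ Δ



/-! ### Auxiliary lemmas -/
set_option linter.unusedSectionVars false

section Aux

variable {Ω : Type*} [LinearOrder Ω] {G : Subgroup (Ω ≃o Ω)}

lemma mul_apply' (f g : Ω ≃o Ω) (x : Ω) : (f * g) x = f (g x) := rfl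

lemma one_apply' (x : Ω) : (1 : Ω ≃o Ω) x = x := rfl

lemma inv_apply_self' (f : Ω ≃o Ω) (x : Ω) : f⁻¹ (f x) = x := f.symm_apply_apply x

lemma apply_inv_self' (f : Ω ≃o Ω) (x : Ω) : f (f⁻¹ x) = x := f.apply_symm_apply x

lemma oi_injective (f : Ω ≃o Ω) : Function.Injective f := f.injective

lemma mem_supp {g : Ω ≃o Ω} {x : Ω} : x ∈ supp g ↔ g x ≠ x := Iff.rfl

lemma not_mem_supp {g : Ω ≃o Ω} {x : Ω} (h : x ∉ supp g) : g x = x := not_not.mp h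

lemma apply_mem_supp {g : Ω ≃o Ω} {x : Ω} (h : x ∈ supp g) : g x ∈ supp g := by
  intro hc
  exact h (oi_injective g hc)

lemma supp_inv (g : Ω ≃o Ω) : supp g⁻¹ = supp g := by
  ext x
  simp only [mem_supp]
  constructor
  · intro hx hc
    exact hx (by calc g⁻¹ x = g⁻¹ (g x) := by rw [hc]
                 _ = x := inv_apply_self' g x)
  · intro hx hc
    exact hx (by calc g x = g (g⁻¹ x) := by rw [hc]
                 _ = x := apply_inv_self' g x)

lemma inv_fix {g : Ω ≃o Ω} {x : Ω} (h : x ∉ supp g) : g⁻¹ x = x :=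
  not_mem_supp (by rwa [supp_inv])

lemma inv_moved {g : Ω ≃o Ω} {x : Ω} (h : g x ≠ x) : g⁻¹ x ≠ x := by
  intro hc
  exact h (by conv_lhs => rw [← hc, apply_inv_self'])

lemma supp_mul_subset (f g : Ω ≃o Ω) : supp (f * g) ⊆ supp f ∪ supp g := by
  intro z hz
  by_cases h1 : z ∈ supp f
  · exact Or.inl h1
  · right
    by_contra h2
    exact hz (by rw [mul_apply', not_mem_supp h2, not_mem_supp h1])

lemma supp_pcomm_subset (a b : Ω ≃o Ω) : supp (pcomm a b) ⊆ supp a ∪ supp b := by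
  intro z hz
  have h1 := supp_mul_subset (a⁻¹ * b⁻¹ * a) b hz
  rcases h1 with h1 | h1
  · have h2 := supp_mul_subset (a⁻¹ * b⁻¹) a h1
    rcases h2 with h2 | h2
    · have h3 := supp_mul_subset a⁻¹ b⁻¹ h2
      rcases h3 with h3 | h3
      · exact Or.inl (by rwa [supp_inv] at h3)
      · exact Or.inr (by rwa [supp_inv] at h3)
    · exact Or.inl h2
  · exact Or.inr h1

lemma eq_of_forall_apply {f g : Ω ≃o Ω} (h : ∀ z, f z = g z) : f = g := by
  ext z; exact h z

lemma commute_of_forall {a b : Ω ≃o Ω} (h : ∀ z, a (b z) = b (a z)) : a * b = b * a :=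
  eq_of_forall_apply h

lemma forall_of_commute {a b : Ω ≃o Ω} (h : a * b = b * a) (z : Ω) : a (b z) = b (a z) :=
  DFunLike.congr_fun h z

lemma pcomm_eq_one_of_commute {a b : Ω ≃o Ω} (h : a * b = b * a) : pcomm a b = 1 := by
  rw [pcomm, mul_assoc (a⁻¹ * b⁻¹) a b, h]
  group

lemma commute_of_pcomm_eq_one {a b : Ω ≃o Ω} (h : pcomm a b = 1) : a * b = b * a := by
  rw [pcomm] at h
  calc a * b = b * a * (a⁻¹ * b⁻¹ * a * b) := by group
  _ = b * a * 1 := by rw [h]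
  _ = b * a := mul_one _

lemma pcomm_ne_one_of_apply {a b : Ω ≃o Ω} {z : Ω} (h : a (b z) ≠ b (a z)) :
    pcomm a b ≠ 1 := by
  intro hc
  exact h (forall_of_commute (commute_of_pcomm_eq_one hc) z)

lemma disjoint_supp_commute {a b : Ω ≃o Ω} (h : ∀ z, z ∈ supp a → z ∉ supp b) :
    a * b = b * a := by
  apply commute_of_forall
  intro z
  by_cases hza : z ∈ supp a
  · have hzb : z ∉ supp b := h z hza
    have h2 : a z ∈ supp a := apply_mem_supp hza
    rw [not_mem_supp hzb, not_mem_supp (h _ h2)]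
  · by_cases hzb : z ∈ supp b
    · have h2 : b z ∈ supp b := apply_mem_supp hzb
      have h3 : b z ∉ supp a := fun hc => (h _ hc) h2
      rw [not_mem_supp hza, not_mem_supp h3]
    · rw [not_mem_supp hzb, not_mem_supp hza, not_mem_supp hzb]

lemma fixes_superset_commute {f x : Ω ≃o Ω} {S : Set Ω}
    (hf : ∀ σ ∈ S, f σ = σ) (hs : supp x ⊆ S) : x * f = f * x := by
  apply commute_of_forall
  intro z
  by_cases hzS : z ∈ S
  · rw [hf z hzS]
    by_cases hzx : z ∈ supp x
    · exact (hf _ (hs (apply_mem_supp hzx))).symm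
    · rw [not_mem_supp hzx, hf z hzS]
  · have hfz : f z ∉ S := by
      intro hc
      exact hzS (by rw [← oi_injective f (hf _ hc)]; exact hc)
    rw [not_mem_supp (fun hc => hfz (hs hc)), not_mem_supp (fun hc => hzS (hs hc))]

lemma cent_supp_pres {f w : Ω ≃o Ω} (hc : w * f = f * w) {β : Ω} (hβ : β ∈ supp w) :
    f⁻¹ β ∈ supp w := by
  by_contra hnot
  have h1 := forall_of_commute hc (f⁻¹ β)
  rw [not_mem_supp hnot, apply_inv_self'] at h1
  exact hβ h1

lemma aconj_apply (h g : Ω ≃o Ω) (z : Ω) : (aconj h g) z = g⁻¹ (h (g z)) := rfl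

lemma aconj_mem {h g : Ω ≃o Ω} (hh : h ∈ G) (hg : g ∈ G) : aconj h g ∈ G :=
  mul_mem (mul_mem (inv_mem hg) hh) hg

lemma aconj_one (h : Ω ≃o Ω) : aconj h 1 = h := by
  rw [aconj]; group

lemma aconj_aconj (h g k : Ω ≃o Ω) : aconj (aconj h g) k = aconj h (g * k) := by
  rw [aconj, aconj, aconj]; group

lemma aconj_inv (h g : Ω ≃o Ω) : (aconj h g)⁻¹ = aconj h⁻¹ g := by
  rw [aconj, aconj]; group

lemma mem_supp_aconj {h g : Ω ≃o Ω} {z : Ω} : z ∈ supp (aconj h g) ↔ g z ∈ supp h := by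
  rw [mem_supp, mem_supp, aconj_apply]
  constructor
  · intro h1 hc
    exact h1 (by rw [hc, inv_apply_self'])
  · intro h1 hc
    exact h1 (by conv_rhs => rw [← hc, apply_inv_self'])

lemma strict_up {g : Ω ≃o Ω} {x : Ω} (h : x < g x) : g x < g (g x) := g.lt_iff_lt.mpr h

lemma strict_dn {g : Ω ≃o Ω} {x : Ω} (h : g x < x) : g (g x) < g x := g.lt_iff_lt.mpr h

lemma sq_moved {g : Ω ≃o Ω} {x : Ω} (h : g x ≠ x) : g (g x) ≠ x := by
  rcases lt_or_gt_of_ne h with h1 | h1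
  · exact ne_of_lt (lt_trans (strict_dn h1) h1)
  · exact ne_of_gt (lt_trans h1 (strict_up h1))

lemma moved_iter {g : Ω ≃o Ω} {x : Ω} (h : g x ≠ x) : g (g x) ≠ g x := by
  intro hc; exact h (oi_injective g hc)

end Aux

section Cong

variable {Ω : Type*} [LinearOrder Ω] {G : Subgroup (Ω ≃o Ω)}

lemma eq_isCC : IsConvexCongruence G (Eq : Ω → Ω → Prop) := by
  refine ⟨eq_equivalence, ?_, ?_⟩
  · intro a b c hac hab hbc
    subst hac
    exact le_antisymm hab hbc
  · intro g _ a b hab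
    rw [hab]

lemma vcong_isCC (a b : Ω) : IsConvexCongruence G (Vcong G a b) := by
  refine ⟨⟨?_, ?_, ?_⟩, ?_, ?_⟩
  · intro x r hr _
    exact hr.1.refl x
  · intro x y hxy r hr hab
    exact hr.1.symm (hxy r hr hab)
  · intro x y z hxy hyz r hr hab
    exact hr.1.trans (hxy r hr hab) (hyz r hr hab)
  · intro x y z hxz hxy hyz r hr hab
    exact hr.2.1 x y z (hxz r hr hab) hxy hyz
  · intro g hg x y hxy r hr hab
    exact hr.2.2 g hg x y (hxy r hr hab)

lemma vcong_pair (a b : Ω) : Vcong G a b a b := fun _ _ h => h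

lemma vcong_min {r : Ω → Ω → Prop} (hr : IsConvexCongruence G r) {a b : Ω}
    (hab : r a b) : relLe (Vcong G a b) r := fun _ _ hxy => hxy r hr hab

lemma relLe_antisymm {r s : Ω → Ω → Prop} (h1 : relLe r s) (h2 : relLe s r) : r = s := by
  funext x y
  exact propext ⟨h1 x y, h2 x y⟩

lemma relLe_trans {r s t : Ω → Ω → Prop} (h1 : relLe r s) (h2 : relLe s t) : relLe r t :=
  fun x y h => h2 x y (h1 x y h)

lemma cc_inv_iff {r : Ω → Ω → Prop} (hr : IsConvexCongruence G r) {g : Ω ≃o Ω}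
    (hg : g ∈ G) {x y : Ω} : r (g x) (g y) ↔ r x y := by
  constructor
  · intro h
    have h2 := hr.2.2 g⁻¹ (inv_mem hg) _ _ h
    rwa [inv_apply_self', inv_apply_self'] at h2
  · exact hr.2.2 g hg x y

lemma vcong_conj {g : Ω ≃o Ω} (hg : g ∈ G) (a b : Ω) :
    Vcong G (g a) (g b) = Vcong G a b := by
  funext x y
  apply propext
  constructor
  · intro h r hr hab
    exact h r hr (hr.2.2 g hg a b hab)
  · intro h r hr hab
    exact h r hr ((cc_inv_iff hr hg).mp hab)

lemma vcong_symm (a b : Ω) : Vcong G a b = Vcong G b a := by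
  funext x y
  apply propext
  constructor
  · intro h r hr hab
    exact h r hr (hr.1.symm hab)
  · intro h r hr hab
    exact h r hr (hr.1.symm hab)

lemma spine_isCC {r : Ω → Ω → Prop} (hr : SpineMem G r) : IsConvexCongruence G r := by
  obtain ⟨a, b, -, rfl⟩ := hr
  exact vcong_isCC a b

/-- helper for the comparability of convex congruences -/
lemma cc_aux (htrans : IsTransitive G) {r₁ r₂ : Ω → Ω → Prop}
    (h₁ : IsConvexCongruence G r₁) (h₂ : IsConvexCongruence G r₂) {α ξ η : Ω}
    (hξ1 : r₁ α ξ) (hξ2 : ¬ r₂ α ξ) (hη2 : r₂ α η) (hη1 : ¬ r₁ α η)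
    (pos2 : ∀ z, r₂ α z → z < ξ) (pos1 : ∀ z, r₁ α z → η < z) : False := by
  obtain ⟨g, hg, hgα⟩ := htrans α ξ
  -- g maps the r₁-class of α into itself
  have pres : ∀ z, r₁ α z → r₁ α (g z) := by
    intro z hz
    have := h₁.2.2 g hg α z hz
    rw [hgα] at this
    exact h₁.1.trans hξ1 this
  have presinv : ∀ z, r₁ α z → r₁ α (g⁻¹ z) := by
    intro z hz
    have h3 := h₁.2.2 g⁻¹ (inv_mem hg) α z hz
    have h4 : r₁ α (g⁻¹ α) := by
      have h5 := h₁.2.2 g⁻¹ (inv_mem hg) α ξ hξ1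
      rw [← hgα, inv_apply_self'] at h5
      exact h₁.1.symm h5
    exact h₁.1.trans h4 h3
  -- g η is below the whole r₁-class of α
  have below : ∀ z, r₁ α z → g η < z := by
    intro z hz
    have h3 : η < g⁻¹ z := pos1 _ (presinv z hz)
    have h4 : g η < g (g⁻¹ z) := g.lt_iff_lt.mpr h3
    rwa [apply_inv_self'] at h4
  have hbelow : g η < α := below α (h₁.1.refl α)
  -- g η is above the whole r₂-class of α
  have h6 : r₂ ξ (g η) := by
    have := h₂.2.2 g hg α η hη2
    rwa [hgα] at this
  have above : α < g η := by
    by_contra hc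
    push_neg at hc
    -- g η ≤ α < ξ, with r₂ ξ (g η): convexity gives r₂ α ξ
    have hαξ : α < ξ := by
      have := pos2 α (h₂.1.refl α)
      exact this
    have h7 : r₂ (g η) ξ := h₂.1.symm h6
    have h8 : r₂ (g η) α := h₂.2.1 (g η) α ξ h7 hc (le_of_lt hαξ)
    have h9 : r₂ α (g η) := h₂.1.symm h8
    exact hξ2 (h₂.1.trans h9 (h₂.1.symm h6))
  exact absurd hbelow (not_lt.mpr (le_of_lt above))

lemma cc_side {r : Ω → Ω → Prop} (hr : IsConvexCongruence G r) {α ξ : Ω}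
    (hne : ¬ r α ξ) : (∀ z, r α z → z < ξ) ∨ (∀ z, r α z → ξ < z) := by
  have hξα : ξ ≠ α := fun h => hne (h ▸ hr.1.refl α)
  rcases lt_or_gt_of_ne hξα with h1 | h1
  · -- ξ < α
    right
    intro z hz
    by_contra hc
    push_neg at hc
    have h2 : r z ξ := hr.2.1 z ξ α (hr.1.symm hz) hc (le_of_lt h1)
    exact hne (hr.1.trans hz h2)
  · -- α < ξ
    left
    intro z hz
    by_contra hc
    push_neg at hc
    exact hne (hr.2.1 α ξ z hz (le_of_lt h1) hc)

lemma cc_comparable (htrans : IsTransitive G) {r₁ r₂ : Ω → Ω → Prop}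
    (h₁ : IsConvexCongruence G r₁) (h₂ : IsConvexCongruence G r₂) :
    relLe r₁ r₂ ∨ relLe r₂ r₁ := by
  by_contra hc
  push_neg at hc
  obtain ⟨hn1, hn2⟩ := hc
  rw [relLe] at hn1 hn2
  push_neg at hn1 hn2
  obtain ⟨x, y, hxy1, hxy2⟩ := hn1
  obtain ⟨u, v, huv2, huv1⟩ := hn2
  obtain ⟨g, hg, hgu⟩ := htrans u x
  have hξ1 : r₁ x y := hxy1
  have hξ2 : ¬ r₂ x y := hxy2
  have hη2 : r₂ x (g v) := by
    have := h₂.2.2 g hg u v huv2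
    rwa [hgu] at this
  have hη1 : ¬ r₁ x (g v) := by
    intro hcc
    rw [← hgu] at hcc
    exact huv1 ((cc_inv_iff h₁ hg).mp hcc)
  rcases cc_side h₂ hξ2 with p2 | p2 <;> rcases cc_side h₁ hη1 with p1 | p1
  · -- z < y on C₂ ; z < g v on C₁
    exact absurd (p2 _ hη2) (not_lt.mpr (le_of_lt (p1 _ hξ1)))
  · -- z < y on C₂ ; g v < z on C₁ : cc_aux
    exact cc_aux htrans h₁ h₂ hξ1 hξ2 hη2 hη1 p2 p1
  · -- y < z on C₂ ; z < g v on C₁ : mirrored cc_aux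
    exact cc_aux htrans h₂ h₁ hη2 hη1 hξ1 hξ2 p1 p2
  · -- y < z on C₂ ; g v < z on C₁
    exact absurd (p2 _ hη2) (not_lt.mpr (le_of_lt (p1 _ hξ1)))

end Cong

section Tools

set_option linter.unusedSectionVars false

variable {Ω : Type*} [LinearOrder Ω] {G : Subgroup (Ω ≃o Ω)}

lemma autSup_apply (f g : Ω ≃o Ω) (x : Ω) : (autSup f g) x = max (f x) (g x) := rfl

lemma supp_pres {u : Ω ≃o Ω} {S : Set Ω} (h : supp u ⊆ S) {z : Ω} (hz : z ∈ S) :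
    u z ∈ S := by
  by_cases hm : z ∈ supp u
  · exact h (apply_mem_supp hm)
  · rwa [not_mem_supp hm]

lemma supp_pres_inv {u : Ω ≃o Ω} {S : Set Ω} (h : supp u ⊆ S) {z : Ω} (hz : z ∈ S) :
    u⁻¹ z ∈ S := supp_pres (by rwa [supp_inv]) hz

lemma fix_out {u : Ω ≃o Ω} {S : Set Ω} (h : supp u ⊆ S) {z : Ω} (hz : z ∉ S) :
    u z = z := not_mem_supp (fun hc => hz (h hc))

lemma fix_out_inv {u : Ω ≃o Ω} {S : Set Ω} (h : supp u ⊆ S) {z : Ω} (hz : z ∉ S) :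
    u⁻¹ z = z := fix_out (by rwa [supp_inv]) hz

lemma abs_mem (hlat : SublatticeClosed G) {v : Ω ≃o Ω} (hv : v ∈ G) :
    autSup v v⁻¹ ∈ G := (hlat v v⁻¹ hv (inv_mem hv)).1

lemma abs_supp (v : Ω ≃o Ω) : supp (autSup v v⁻¹) ⊆ supp v := by
  intro z hz
  rw [mem_supp, autSup_apply] at hz
  intro hc
  apply hz
  have h2 : v⁻¹ z = z := by
    calc v⁻¹ z = v⁻¹ (v z) := by rw [hc]
    _ = z := inv_apply_self' v z
  rw [hc, h2, max_self]

lemma abs_le (v : Ω ≃o Ω) (z : Ω) : z ≤ (autSup v v⁻¹) z := by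
  rw [autSup_apply]
  rcases le_total z (v z) with h | h
  · exact le_trans h (le_max_left _ _)
  · refine le_trans ?_ (le_max_right _ _)
    have := v⁻¹.monotone h
    rwa [show v⁻¹ (v z) = z from inv_apply_self' v z] at this

lemma abs_lt (v : Ω ≃o Ω) {δ : Ω} (h : v δ ≠ δ) : δ < (autSup v v⁻¹) δ := by
  rw [autSup_apply]
  rcases lt_or_gt_of_ne h with h1 | h1
  · refine lt_of_lt_of_le ?_ (le_max_right _ _)
    have := v⁻¹.strictMono h1
    rwa [show v⁻¹ (v δ) = δ from inv_apply_self' v δ] at this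
  · exact lt_of_lt_of_le h1 (le_max_left _ _)

lemma abs_choice (v : Ω ≃o Ω) (δ : Ω) :
    (autSup v v⁻¹) δ = v δ ∨ (autSup v v⁻¹) δ = v⁻¹ δ := by
  rw [autSup_apply]; exact max_choice _ _

lemma abs_inv_le (v : Ω ≃o Ω) (z : Ω) : (autSup v v⁻¹)⁻¹ z ≤ z := by
  have := abs_le v ((autSup v v⁻¹)⁻¹ z)
  rwa [apply_inv_self'] at this

/-- Depressible elements: move `δ` to `τ` within the class of a spine congruence. -/
lemma dep (habund : Abundant G) {s : Ω → Ω → Prop} (hs : SpineMem G s) {v : Ω ≃o Ω}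
    (hv : v ∈ G) {δ τ : Ω} (hδτ : s δ τ) (hvδ : v δ = τ) :
    ∃ u ∈ G, u δ = τ ∧ supp u ⊆ {γ | s δ γ} := by
  have hcc := spine_isCC (G := G) hs
  have himg : (v : Ω ≃o Ω) '' {γ | s δ γ} = {γ | s δ γ} := by
    ext z
    constructor
    · rintro ⟨x, hx, rfl⟩
      have h1 : s (v δ) (v x) := hcc.2.2 v hv δ x hx
      rw [hvδ] at h1
      exact hcc.1.trans hδτ h1
    · intro hz
      refine ⟨v⁻¹ z, ?_, apply_inv_self' v z⟩
      have h1 : s (v⁻¹ δ) (v⁻¹ z) := hcc.2.2 v⁻¹ (inv_mem hv) δ z hz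
      have h2 : s (v⁻¹ δ) δ := by
        have h3 := hcc.2.2 v⁻¹ (inv_mem hv) δ (v δ) (hvδ ▸ hδτ)
        rwa [inv_apply_self'] at h3
      exact hcc.1.trans (hcc.1.symm h2) h1
  have hInT : InT G {γ | s δ γ} := ⟨s, hs, δ, rfl⟩
  obtain ⟨u, huG, hagree, hfix⟩ := habund _ hInT v ⟨hv, himg⟩
  refine ⟨u, huG, ?_, ?_⟩
  · rw [hagree δ (hcc.1.refl δ), hvδ]
  · intro z hz
    by_contra hc
    exact hz (hfix z hc)

/-- every spine class based anywhere contains a second point at "distance" exactly `s`,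
reachable by an element supported inside the class. -/
lemma ample (htrans : IsTransitive G) (habund : Abundant G) {s : Ω → Ω → Prop}
    (hs : SpineMem G s) (δ : Ω) :
    ∃ u ∈ G, u δ ≠ δ ∧ supp u ⊆ {γ | s δ γ} ∧ Vcong G δ (u δ) = s := by
  obtain ⟨a, b, hab, rfl⟩ := hs
  obtain ⟨p, hp, hpa⟩ := htrans a δ
  set τ := p b with hτ
  have hδτ : Vcong G a b δ τ := by
    have := (vcong_isCC (G := G) a b).2.2 p hp a b (vcong_pair a b)
    rwa [hpa] at this
  have hτδ : τ ≠ δ := by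
    rw [hτ, ← hpa]
    intro hc
    exact hab (oi_injective p hc).symm
  obtain ⟨q, hq, hqδ⟩ := htrans δ τ
  obtain ⟨u, huG, huδ, husupp⟩ :=
    dep habund ⟨a, b, hab, rfl⟩ hq hδτ hqδ
  refine ⟨u, huG, by rw [huδ]; exact hτδ, husupp, ?_⟩
  rw [huδ, hτ, ← hpa, vcong_conj hp]

/-- Finding spine members avoiding finitely many pairs. -/
lemma exists_spine_forb (htrans : IsTransitive G) (hnomin : SpineNoMin G)
    {κ : Ω → Ω → Prop} (hκ : SpineMem G κ) (L : List (Ω × Ω)) :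
    ∃ s, SpineMem G s ∧ ∀ p ∈ L, p.1 ≠ p.2 → ¬ s p.1 p.2 := by
  induction L with
  | nil =>
    obtain ⟨s, hs, -, -⟩ := hnomin κ hκ
    exact ⟨s, hs, by simp⟩
  | cons p L ih =>
    obtain ⟨s, hs, hforb⟩ := ih
    by_cases hp : p.1 = p.2
    · refine ⟨s, hs, ?_⟩
      intro q hq hne
      rcases List.mem_cons.mp hq with rfl | hq
      · exact absurd hp hne
      · exact hforb q hq hne
    · have hV : SpineMem G (Vcong G p.1 p.2) := ⟨p.1, p.2, hp, rfl⟩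
      have hcomp := cc_comparable htrans (spine_isCC hs) (spine_isCC (G := G) hV)
      -- m : a spine member below both s and V
      obtain ⟨m, hm, hms, hmV⟩ : ∃ m, SpineMem G m ∧ relLe m s ∧ relLe m (Vcong G p.1 p.2) := by
        rcases hcomp with h | h
        · exact ⟨s, hs, fun _ _ h' => h', h⟩
        · exact ⟨_, hV, h, fun _ _ h' => h'⟩
      obtain ⟨s', hs', hle, hne'⟩ := hnomin m hm
      refine ⟨s', hs', ?_⟩
      intro q hq hneq
      rcases List.mem_cons.mp hq with rfl | hq
      · intro hc
        have h1 : relLe (Vcong G q.1 q.2) s' := vcong_min (spine_isCC hs') hc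
        have h2 : relLe m s' := relLe_trans hmV h1
        exact hne' (relLe_antisymm hle h2)
      · intro hc
        exact hforb q hq hneq (hms _ _ (hle _ _ hc))

end Tools

section Loc

set_option linter.unusedSectionVars false

variable {Ω : Type*} [LinearOrder Ω] {G : Subgroup (Ω ≃o Ω)}

/-- The localized commutator: values on the base class and triviality far away. -/
lemma loc {x e : Ω ≃o Ω} (hx : x ∈ G) {s : Ω → Ω → Prop} (hs : IsConvexCongruence G s)
    {γ : Ω} (h1 : ¬ s γ (x γ)) (h2 : ¬ s γ (x⁻¹ γ)) (he : supp e ⊆ {z | s γ z}) :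
    (∀ z, s γ z → (pcomm x⁻¹ (aconj x e)) z = e (e z)) ∧
    (∀ z, ¬ s γ z → ¬ s (x γ) z → ¬ s (x⁻¹ γ) z → (pcomm x⁻¹ (aconj x e)) z = z) := by
  have hw : pcomm x⁻¹ (aconj x e) = x * e⁻¹ * x⁻¹ * e * x⁻¹ * e⁻¹ * x * e := by
    rw [pcomm, aconj]; group
  have happ : ∀ z, (pcomm x⁻¹ (aconj x e)) z
      = x (e⁻¹ (x⁻¹ (e (x⁻¹ (e⁻¹ (x (e z))))))) := by
    intro z; rw [hw]; rfl
  have hd1 : ∀ z, s γ z → ¬ s (x γ) z := by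
    intro z hz hc
    exact h1 (hs.1.trans hz (hs.1.symm hc))
  have hd2 : ∀ z, s γ z → ¬ s (x⁻¹ γ) z := by
    intro z hz hc
    exact h2 (hs.1.trans hz (hs.1.symm hc))
  have hup : ∀ z, s γ z → s (x γ) (x z) := fun z hz => hs.2.2 x hx γ z hz
  have hdn : ∀ z, s γ z → s (x⁻¹ γ) (x⁻¹ z) := fun z hz => hs.2.2 x⁻¹ (inv_mem hx) γ z hz
  constructor
  · intro z hz
    rw [happ z]
    have hz1 : s γ (e z) := supp_pres he hz
    have eq1 : e⁻¹ (x (e z)) = x (e z) :=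
      fix_out_inv he (fun hc => hd1 _ hc (hup _ hz1))
    rw [eq1, inv_apply_self' x (e z)]
    have hz2 : s γ (e (e z)) := supp_pres he hz1
    have eq2 : e⁻¹ (x⁻¹ (e (e z))) = x⁻¹ (e (e z)) := by
      refine fix_out_inv he (fun hc => ?_)
      have h5 : s (x⁻¹ γ) (x⁻¹ (e (e z))) := hdn _ hz2
      exact hd2 _ hc h5
    rw [eq2, apply_inv_self' x (e (e z))]
  · intro z hz hz2 hz3
    rw [happ z]
    have e0 : e z = z := fix_out he hz
    rw [e0]
    have n1 : ¬ s γ (x z) := by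
      intro hc
      have h5 := hdn _ hc
      rw [inv_apply_self'] at h5
      exact hz3 h5
    rw [fix_out_inv he n1, inv_apply_self' x z, e0]
    have n2 : ¬ s γ (x⁻¹ z) := by
      intro hc
      have h5 := hup _ hc
      rw [apply_inv_self'] at h5
      exact hz2 h5
    rw [fix_out_inv he n2, apply_inv_self' x z]

/-- Support of elements of `X_x` lies in the class containing `supp x` (or they are `1`). -/
lemma x_supp {x : Ω ≃o Ω} {s : Ω → Ω → Prop} (hs : IsConvexCongruence G s) {b₀ : Ω}
    (hsupp : ∀ z ∈ supp x, s b₀ z) {a : Ω ≃o Ω} (ha : a ∈ Xset G x) :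
    a = 1 ∨ ∀ z ∈ supp a, s b₀ z := by
  obtain ⟨g₂, hg₂, rfl⟩ := ha
  by_cases hcl : s b₀ (g₂⁻¹ b₀)
  · right
    intro z hz
    rcases supp_pcomm_subset _ _ hz with h | h
    · rw [supp_inv] at h
      exact hsupp z h
    · have h4 : s b₀ (g₂ z) := hsupp _ (mem_supp_aconj.mp h)
      have h5 := hs.2.2 g₂⁻¹ (inv_mem hg₂) _ _ h4
      rw [inv_apply_self'] at h5
      exact hs.1.trans hcl h5
  · left
    apply pcomm_eq_one_of_commute
    apply disjoint_supp_commute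
    intro z hz1 hz2
    rw [supp_inv] at hz1
    have h4 := hsupp z hz1
    have h5 : s b₀ (g₂ z) := hsupp _ (mem_supp_aconj.mp hz2)
    have h6 := hs.2.2 g₂⁻¹ (inv_mem hg₂) _ _ h5
    rw [inv_apply_self'] at h6
    exact hcl (hs.1.trans h4 (hs.1.symm h6))

/-- Support of nontrivial elements of `W_x` lies in the class containing `supp x`. -/
lemma w_supp {x : Ω ≃o Ω} {s : Ω → Ω → Prop} (hs : IsConvexCongruence G s) {b₀ : Ω}
    (hsupp : ∀ z ∈ supp x, s b₀ z) {w : Ω ≃o Ω} (hw : w ∈ Wset G x) :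
    w = 1 ∨ ∀ z ∈ supp w, s b₀ z := by
  obtain ⟨g, hg, ⟨a, haX, b, hbX, hab⟩, hwX⟩ := hw
  have hsupp' : ∀ z ∈ supp (aconj x g), s (g⁻¹ b₀) z := by
    intro z hz
    have h4 : s b₀ (g z) := hsupp _ (mem_supp_aconj.mp hz)
    have h5 := hs.2.2 g⁻¹ (inv_mem hg) _ _ h4
    rwa [inv_apply_self'] at h5
  rcases x_supp hs hsupp haX with rfl | hA
  · exact absurd (show pcomm 1 b = 1 by rw [pcomm]; group) hab
  rcases x_supp hs hsupp' hbX with rfl | hB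
  · exact absurd (show pcomm a 1 = 1 by rw [pcomm]; group) hab
  have hint : ∃ z, z ∈ supp a ∧ z ∈ supp b := by
    by_contra hc
    push_neg at hc
    exact hab (pcomm_eq_one_of_commute (disjoint_supp_commute hc))
  obtain ⟨z₀, hz₀a, hz₀b⟩ := hint
  have hkey : s b₀ (g⁻¹ b₀) := hs.1.trans (hA _ hz₀a) (hs.1.symm (hB _ hz₀b))
  rcases x_supp hs hsupp' hwX with rfl | hW
  · exact Or.inl rfl
  · right
    intro z hz
    exact hs.1.trans hkey (hW z hz)

/-- The non-commuting condition between `X_h` and `X_{h'}` at a common crossing point. -/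
lemma nc (hlat : SublatticeClosed G) (htrans : IsTransitive G) (habund : Abundant G)
    (hnomin : SpineNoMin G) {h x' : Ω ≃o Ω} (hh : h ∈ G) (hx' : x' ∈ G) {γ₂ : Ω}
    (c1 : h γ₂ ≠ γ₂) (c2 : x' γ₂ ≠ γ₂) :
    ∃ a ∈ Xset G h, ∃ b ∈ Xset G x', pcomm a b ≠ 1 := by
  have hbase : SpineMem G (Vcong G γ₂ (h γ₂)) := ⟨γ₂, h γ₂, Ne.symm c1, rfl⟩
  obtain ⟨t, ht, hforb⟩ := exists_spine_forb htrans hnomin hbase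
    [(γ₂, h γ₂), (γ₂, h⁻¹ γ₂), (γ₂, x' γ₂), (γ₂, x'⁻¹ γ₂)]
  have htcc := spine_isCC (G := G) ht
  have f1 : ¬ t γ₂ (h γ₂) := hforb (γ₂, h γ₂) (by simp) (Ne.symm c1)
  have f2 : ¬ t γ₂ (h⁻¹ γ₂) := hforb (γ₂, h⁻¹ γ₂) (by simp) (Ne.symm (inv_moved c1))
  have f3 : ¬ t γ₂ (x' γ₂) := hforb (γ₂, x' γ₂) (by simp) (Ne.symm c2)
  have f4 : ¬ t γ₂ (x'⁻¹ γ₂) := hforb (γ₂, x'⁻¹ γ₂) (by simp) (Ne.symm (inv_moved c2))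
  obtain ⟨v₂, hv₂G, hv₂m, hv₂s, hv₂V⟩ := ample htrans habund ht γ₂
  set g₂ := autSup v₂ v₂⁻¹ with hg₂def
  have hg₂G : g₂ ∈ G := abs_mem hlat hv₂G
  have hg₂s : supp g₂ ⊆ {z | t γ₂ z} := subset_trans (abs_supp v₂) hv₂s
  obtain ⟨t', ht', hle', hne'⟩ := hnomin t ht
  have ht'cc := spine_isCC (G := G) ht'
  obtain ⟨v₃, hv₃G, hv₃m, hv₃s, hv₃V⟩ := ample htrans habund ht' γ₂
  set g₃ := autSup v₃ v₃⁻¹ with hg₃def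
  have hg₃G : g₃ ∈ G := abs_mem hlat hv₃G
  have hg₃s' : supp g₃ ⊆ {z | t' γ₂ z} := subset_trans (abs_supp v₃) hv₃s
  have hg₃s : supp g₃ ⊆ {z | t γ₂ z} := fun z hz => hle' _ _ (hg₃s' hz)
  have key1 : ¬ t' γ₂ (g₂ γ₂) := by
    rcases abs_choice v₂ γ₂ with hch | hch
    · rw [hg₂def, hch]
      intro hcon
      have h5 := vcong_min ht'cc hcon
      rw [hv₂V] at h5
      exact hne' (relLe_antisymm hle' h5)
    · rw [hg₂def, hch]
      intro hcon
      have h5 : t' (v₂ γ₂) (v₂ (v₂⁻¹ γ₂)) := ht'cc.2.2 v₂ hv₂G _ _ hcon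
      rw [apply_inv_self'] at h5
      have h6 := vcong_min ht'cc (ht'cc.1.symm h5)
      rw [hv₂V] at h6
      exact hne' (relLe_antisymm hle' h6)
  set z := g₂⁻¹ (g₂⁻¹ γ₂) with hzdef
  have hzΓ : t γ₂ z := supp_pres_inv hg₂s (supp_pres_inv hg₂s (htcc.1.refl γ₂))
  have keyz : ¬ t' γ₂ z := by
    intro hcon
    have hle1 : g₂⁻¹ γ₂ ≤ γ₂ := abs_inv_le v₂ γ₂
    have hle2 : z ≤ g₂⁻¹ γ₂ := abs_inv_le v₂ (g₂⁻¹ γ₂)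
    have h7 : t' z (g₂⁻¹ γ₂) := ht'cc.2.1 z (g₂⁻¹ γ₂) γ₂ (ht'cc.1.symm hcon) hle2 hle1
    have h8 : t' γ₂ (g₂⁻¹ γ₂) := ht'cc.1.trans hcon h7
    have h9 : t' (g₂ γ₂) (g₂ (g₂⁻¹ γ₂)) := ht'cc.2.2 g₂ hg₂G _ _ h8
    rw [apply_inv_self'] at h9
    exact key1 (ht'cc.1.symm h9)
  refine ⟨pcomm h⁻¹ (aconj h g₂), ⟨g₂, hg₂G, rfl⟩,
    pcomm x'⁻¹ (aconj x' g₃), ⟨g₃, hg₃G, rfl⟩, ?_⟩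
  have loca := (loc hh htcc f1 f2 hg₂s).1
  have locb := (loc hx' htcc f3 f4 hg₃s).1
  apply pcomm_ne_one_of_apply (z := z)
  have hg₃z : g₃ z = z := fix_out hg₃s' keyz
  have hbz : pcomm x'⁻¹ (aconj x' g₃) z = z := by
    rw [locb z hzΓ, hg₃z, hg₃z]
  have haz : pcomm h⁻¹ (aconj h g₂) z = γ₂ := by
    rw [loca z hzΓ, hzdef, apply_inv_self', apply_inv_self']
  rw [hbz, haz, locb γ₂ (htcc.1.refl γ₂)]
  have hl1 : γ₂ < g₃ γ₂ := abs_lt v₃ hv₃m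
  have hl2 : g₃ γ₂ ≤ g₃ (g₃ γ₂) := abs_le v₃ (g₃ γ₂)
  exact ne_of_lt (lt_of_lt_of_le hl1 hl2)

end Loc

section Pin

set_option linter.unusedSectionVars false

variable {Ω : Type*} [LinearOrder Ω] {G : Subgroup (Ω ≃o Ω)}

/-- The pinning lemma: a centralizing element can displace `β` only to
`h₁ β` or `h₁⁻¹ β`, where `h₁` is a conjugate of `h` moving `β` that has a
common crossing point with `h`. -/
lemma pin (hlat : SublatticeClosed G) (htrans : IsTransitive G) (habund : Abundant G)
    (hnomin : SpineNoMin G) {h g f : Ω ≃o Ω} {β γ₂ : Ω} (hh : h ∈ G) (hg : g ∈ G)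
    (hf : f ∈ cent G (Wset G h)) (hb : (aconj h g) β ≠ β)
    (c1 : h γ₂ ≠ γ₂) (c2 : (aconj h g) γ₂ ≠ γ₂) :
    f⁻¹ β = β ∨ f⁻¹ β = (aconj h g) β ∨ f⁻¹ β = (aconj h g)⁻¹ β := by
  set h₁ := aconj h g with hh₁
  have hh₁G : h₁ ∈ G := aconj_mem hh hg
  by_contra hc
  push_neg at hc
  obtain ⟨hne1, hne2, hne3⟩ := hc
  set ξ := f⁻¹ β with hξ
  have hbase : SpineMem G (Vcong G β (h₁ β)) := ⟨β, h₁ β, Ne.symm hb, rfl⟩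
  obtain ⟨s, hsS, hforb⟩ := exists_spine_forb htrans hnomin hbase
    [(β, h₁ β), (β, h₁⁻¹ β), (ξ, β), (ξ, h₁ β), (ξ, h₁⁻¹ β)]
  have hscc := spine_isCC (G := G) hsS
  have f1 : ¬ s β (h₁ β) := hforb (β, h₁ β) (by simp) (Ne.symm hb)
  have f2 : ¬ s β (h₁⁻¹ β) := hforb (β, h₁⁻¹ β) (by simp) (Ne.symm (inv_moved hb))
  have f3 : ¬ s ξ β := hforb (ξ, β) (by simp) hne1
  have f4 : ¬ s ξ (h₁ β) := hforb (ξ, h₁ β) (by simp) hne2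
  have f5 : ¬ s ξ (h₁⁻¹ β) := hforb (ξ, h₁⁻¹ β) (by simp) hne3
  obtain ⟨v, hvG, hvm, hvs, hvV⟩ := ample htrans habund hsS β
  set e := autSup v v⁻¹ with hedef
  have heG : e ∈ G := abs_mem hlat hvG
  have hes : supp e ⊆ {z | s β z} := subset_trans (abs_supp v) hvs
  set w := pcomm h₁⁻¹ (aconj h₁ e) with hwdef
  have hloc := loc hh₁G hscc f1 f2 hes
  have hwβ : w β = e (e β) := hloc.1 β (hscc.1.refl β)
  have hwβm : w β ≠ β := by
    rw [hwβ]
    have hl1 : β < e β := abs_lt v hvm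
    exact ne_of_gt (lt_of_lt_of_le hl1 (abs_le v (e β)))
  have hwW : w ∈ Wset G h :=
    ⟨g, hg, nc hlat htrans habund hnomin hh hh₁G c1 c2, ⟨e, heG, rfl⟩⟩
  have hcomm := hf.2 w hwW
  have hξsupp : ξ ∈ supp w := cent_supp_pres hcomm hwβm
  exact hξsupp (hloc.2 ξ (fun hcon => f3 (hscc.1.symm hcon))
    (fun hcon => f4 (hscc.1.symm hcon)) (fun hcon => f5 (hscc.1.symm hcon)))

end Pin

section Fix

set_option linter.unusedSectionVars false

variable {Ω : Type*} [LinearOrder Ω] {G : Subgroup (Ω ≃o Ω)}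

lemma inv_side_up {g : Ω ≃o Ω} {x : Ω} (h : g x < x) : x < g⁻¹ x := by
  have := g⁻¹.strictMono h
  rwa [inv_apply_self'] at this

lemma inv_side_dn {g : Ω ≃o Ω} {x : Ω} (h : x < g x) : g⁻¹ x < x := by
  have := g⁻¹.strictMono h
  rwa [inv_apply_self'] at this

lemma conv_between {s : Ω → Ω → Prop} (hcc : IsConvexCongruence G s) {a b c : Ω}
    (hab : s a b) (h : (a ≤ c ∧ c ≤ b) ∨ (b ≤ c ∧ c ≤ a)) : s a c := by
  rcases h with ⟨h1, h2⟩ | ⟨h1, h2⟩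
  · exact hcc.2.1 a c b hab h1 h2
  · exact hcc.1.trans hab (hcc.2.1 b c a (hcc.1.symm hab) h1 h2)

/-- `β` lies between `h₁⁻¹ β` and `h₁ β`; so a class containing one endpoint
and avoiding `β` cannot contain the other endpoint. -/
lemma opp_not_in_class {s : Ω → Ω → Prop} (hcc : IsConvexCongruence G s) {h₁ : Ω ≃o Ω}
    {β : Ω} (hb : h₁ β ≠ β) (hout : ¬ s (h₁ β) β) : ¬ s (h₁ β) (h₁⁻¹ β) := by
  intro hcon
  apply hout
  rcases lt_or_gt_of_ne hb with h1 | h1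
  · exact conv_between hcc hcon (Or.inl ⟨le_of_lt h1, le_of_lt (inv_side_up h1)⟩)
  · exact conv_between hcc hcon (Or.inr ⟨le_of_lt (inv_side_dn h1), le_of_lt h1⟩)

lemma opp_not_in_class' {s : Ω → Ω → Prop} (hcc : IsConvexCongruence G s) {h₁ : Ω ≃o Ω}
    {β : Ω} (hb : h₁ β ≠ β) (hout : ¬ s (h₁⁻¹ β) β) : ¬ s (h₁⁻¹ β) (h₁ β) := by
  intro hcon
  apply hout
  rcases lt_or_gt_of_ne hb with h1 | h1
  · exact conv_between hcc hcon (Or.inr ⟨le_of_lt h1, le_of_lt (inv_side_up h1)⟩)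
  · exact conv_between hcc hcon (Or.inl ⟨le_of_lt (inv_side_dn h1), le_of_lt h1⟩)

lemma h_sq_ne {h₁ : Ω ≃o Ω} {β : Ω} (hb : h₁ β ≠ β) : h₁ β ≠ h₁⁻¹ β := by
  intro hcon
  have h2 : h₁ (h₁ β) = β := by rw [hcon, apply_inv_self']
  exact sq_moved hb h2

/-- The main fixing lemma: elements of `C_G(W_h)` fix every point of the support
of `h`, and every point which is "properly below κ"-close to the support of `h`. -/
lemma fix_lemma (hlat : SublatticeClosed G) (htrans : IsTransitive G)
    (habund : Abundant G) (hnomin : SpineNoMin G) {h : Ω ≃o Ω} (hh : h ∈ G) {α : Ω}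
    (hα : h α ≠ α) {f : Ω ≃o Ω} (hf : f ∈ cent G (Wset G h)) {β : Ω}
    (hβ : h β ≠ β ∨ ∃ σ, h σ ≠ σ ∧ σ ≠ β ∧ relLe (Vcong G β σ) (Vcong G α (h α)) ∧
      Vcong G β σ ≠ Vcong G α (h α)) :
    f β = β := by
  suffices hred : f⁻¹ β = β by
    conv_lhs => rw [← hred]
    rw [apply_inv_self']
  -- Step 1: find a conjugate of h moving β, with a common crossing point γ₂
  obtain ⟨g, hg, hb, γ₂, c1, c2⟩ : ∃ g, g ∈ G ∧ (aconj h g) β ≠ β ∧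
      ∃ γ₂, h γ₂ ≠ γ₂ ∧ (aconj h g) γ₂ ≠ γ₂ := by
    rcases hβ with hmove | ⟨σ, hσm, hσβ, hle, hneq⟩
    · refine ⟨1, one_mem G, ?_, β, hmove, ?_⟩ <;> rw [aconj_one] <;> exact hmove
    · set κ := Vcong G α (h α) with hκdef
      set m₀ := Vcong G β σ with hm₀def
      have hm₀S : SpineMem G m₀ := ⟨β, σ, Ne.symm hσβ, rfl⟩
      have hm₀cc := spine_isCC (G := G) hm₀S
      have hκcc : IsConvexCongruence G κ := vcong_isCC α (h α)
      -- κ relates α and h² α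
      have claim2 : Vcong G α (h (h α)) = κ := by
        have hdown : relLe (Vcong G α (h (h α))) κ := by
          apply vcong_min hκcc
          have h1 : κ α (h α) := vcong_pair α (h α)
          have h2 : κ (h α) (h (h α)) := (cc_inv_iff hκcc hh).mpr h1
          exact hκcc.1.trans h1 h2
        have hup : relLe κ (Vcong G α (h (h α))) := by
          have hκ'cc : IsConvexCongruence G (Vcong G α (h (h α))) := vcong_isCC _ _
          apply vcong_min hκ'cc
          have hp : Vcong G α (h (h α)) α (h (h α)) := vcong_pair _ _
          rcases lt_or_gt_of_ne hα with h1 | h1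
          · exact conv_between hκ'cc hp (Or.inr ⟨le_of_lt (strict_dn h1), le_of_lt h1⟩)
          · exact conv_between hκ'cc hp (Or.inl ⟨le_of_lt h1, le_of_lt (strict_up h1)⟩)
        exact relLe_antisymm hdown hup
      have hκm₀ : ¬ relLe κ m₀ := by
        intro hcon
        exact hneq (relLe_antisymm hle hcon)
      -- not-both lemmas
      have nb01 : ¬ (m₀ β α ∧ m₀ β (h α)) := by
        rintro ⟨p, q⟩
        exact hκm₀ (vcong_min hm₀cc (hm₀cc.1.trans (hm₀cc.1.symm p) q))
      have nb02 : ¬ (m₀ β α ∧ m₀ β (h (h α))) := by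
        rintro ⟨p, q⟩
        have h3 : m₀ α (h (h α)) := hm₀cc.1.trans (hm₀cc.1.symm p) q
        have h4 := vcong_min hm₀cc h3
        rw [claim2] at h4
        exact hκm₀ h4
      have nb12 : ¬ (m₀ β (h α) ∧ m₀ β (h (h α))) := by
        rintro ⟨p, q⟩
        have h3 : m₀ (h α) (h (h α)) := hm₀cc.1.trans (hm₀cc.1.symm p) q
        have h4 := vcong_min hm₀cc h3
        rw [vcong_conj hh α (h α)] at h4
        exact hκm₀ h4
      have nb13 : ¬ (m₀ β (h α) ∧ m₀ β (h (h (h α)))) := by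
        rintro ⟨p, q⟩
        have h3 : m₀ (h α) (h (h (h α))) := hm₀cc.1.trans (hm₀cc.1.symm p) q
        have h4 := vcong_min hm₀cc h3
        rw [vcong_conj hh α (h (h α)), claim2] at h4
        exact hκm₀ h4
      have m1 : h (h α) ≠ h α := moved_iter hα
      have m2 : h (h (h α)) ≠ h (h α) := moved_iter m1
      -- choose the crossing point γ₂
      obtain ⟨γ₂, hγ₂m, hγ₂C, hhγ₂C⟩ : ∃ γ₂, h γ₂ ≠ γ₂ ∧ ¬ m₀ β γ₂ ∧ ¬ m₀ β (h γ₂) := by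
        by_cases c0 : m₀ β α
        · exact ⟨h α, m1, fun q => nb01 ⟨c0, q⟩, fun q => nb02 ⟨c0, q⟩⟩
        · by_cases c1' : m₀ β (h α)
          · exact ⟨h (h α), m2, fun q => nb12 ⟨c1', q⟩, fun q => nb13 ⟨c1', q⟩⟩
          · exact ⟨α, hα, c0, c1'⟩
      obtain ⟨v, hvG, hvβ⟩ := htrans β σ
      obtain ⟨u, huG, huβ, hus⟩ := dep habund hm₀S hvG (vcong_pair β σ) hvβ
      refine ⟨u, huG, ?_, γ₂, hγ₂m, ?_⟩
      · rw [aconj_apply, huβ]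
        intro hcon
        have h2 : u (u⁻¹ (h σ)) = u β := by rw [hcon]
        rw [apply_inv_self', huβ] at h2
        exact hσm h2
      · rw [aconj_apply, fix_out hus hγ₂C, fix_out_inv hus hhγ₂C]
        exact hγ₂m
  -- Step 2: pinning
  obtain ⟨h₁, hh₁def⟩ : ∃ x, x = aconj h g := ⟨_, rfl⟩
  have hb1 : h₁ β ≠ β := by rw [hh₁def]; exact hb
  have c21 : h₁ γ₂ ≠ γ₂ := by rw [hh₁def]; exact c2
  have hh₁G : h₁ ∈ G := by rw [hh₁def]; exact aconj_mem hh hg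
  rcases pin hlat htrans habund hnomin hh hg hf hb c1 c2 with hdone | hmid | hmid
  · exact hdone
  -- Step 3a : f⁻¹ β = h₁ β is impossible
  · exfalso
    rw [← hh₁def] at hmid
    obtain ⟨s', hs'S, hforb'⟩ := exists_spine_forb htrans hnomin
      ⟨β, h₁ β, Ne.symm hb1, rfl⟩ [(β, h₁ β), (γ₂, h₁ β), (h₁ γ₂, h₁ β)]
    have hs'cc := spine_isCC (G := G) hs'S
    have p1 : ¬ s' β (h₁ β) := hforb' (β, h₁ β) (by simp) (Ne.symm hb1)
    have hβCs : ¬ s' (h₁ β) β := fun q => p1 (hs'cc.1.symm q)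
    obtain ⟨k, hkG, hkm, hks, -⟩ := ample htrans habund hs'S (h₁ β)
    have hgk : g * k ∈ G := mul_mem hg hkG
    have h₂eq : aconj h (g * k) = aconj h₁ k := by
      rw [hh₁def]; exact (aconj_aconj h g k).symm
    have hkβ : k β = β := fix_out hks hβCs
    have hclassmove : ∀ z, s' (h₁ β) z → ¬ s' (h₁ β) (h₁ z) := by
      intro z hz hcon
      have h4 : s' β z := (cc_inv_iff hs'cc hh₁G (x := β) (y := z)).mp hcon
      exact p1 (hs'cc.1.trans h4 (hs'cc.1.symm hz))
    have hq2 : (aconj h (g * k)) β ≠ β := by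
      rw [h₂eq, aconj_apply, hkβ]
      intro hcon
      have hmem : s' (h₁ β) (k⁻¹ (h₁ β)) := supp_pres_inv hks (hs'cc.1.refl (h₁ β))
      rw [hcon] at hmem
      exact hβCs hmem
    have hc2' : (aconj h (g * k)) γ₂ ≠ γ₂ := by
      rw [h₂eq, aconj_apply]
      by_cases hzC : s' (h₁ β) γ₂
      · have hkγ : s' (h₁ β) (k γ₂) := supp_pres hks hzC
        have hout : ¬ s' (h₁ β) (h₁ (k γ₂)) := hclassmove _ hkγ
        rw [fix_out_inv hks hout]
        intro hcon
        exact hout (by rw [hcon]; exact hzC)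
      · rw [fix_out hks hzC]
        by_cases hhzC : s' (h₁ β) (h₁ γ₂)
        · intro hcon
          have hmem : s' (h₁ β) (k⁻¹ (h₁ γ₂)) := supp_pres_inv hks hhzC
          rw [hcon] at hmem
          exact hzC hmem
        · rw [fix_out_inv hks hhzC]
          exact c21
    have hnotin : ¬ s' (h₁ β) (h₁⁻¹ β) := opp_not_in_class hs'cc hb1 hβCs
    have hval : (aconj h₁ k) β = k⁻¹ (h₁ β) := by
      rw [aconj_apply, hkβ]
    have hvalinv : (aconj h₁ k)⁻¹ β = h₁⁻¹ β := by
      rw [aconj_inv, aconj_apply, hkβ, fix_out_inv hks hnotin]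
    rcases pin hlat htrans habund hnomin hh hgk hf hq2 c1 hc2' with hx | hx | hx
    · rw [hx] at hmid
      exact hb1 hmid.symm
    · rw [h₂eq, hval] at hx
      have hcomb : h₁ β = k⁻¹ (h₁ β) := hmid.symm.trans hx
      have h2 : k (h₁ β) = k (k⁻¹ (h₁ β)) := congrArg (fun z => k z) hcomb
      rw [apply_inv_self'] at h2
      exact hkm h2
    · rw [h₂eq, hvalinv] at hx
      have hcomb : h₁ β = h₁⁻¹ β := hmid.symm.trans hx
      exact h_sq_ne hb1 hcomb
  -- Step 3b : f⁻¹ β = h₁⁻¹ β is impossible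
  · exfalso
    rw [← hh₁def] at hmid
    have hbinv : h₁⁻¹ β ≠ β := inv_moved hb1
    obtain ⟨s', hs'S, hforb'⟩ := exists_spine_forb htrans hnomin
      ⟨β, h₁ β, Ne.symm hb1, rfl⟩ [(β, h₁⁻¹ β), (γ₂, h₁⁻¹ β), (h₁ γ₂, h₁⁻¹ β)]
    have hs'cc := spine_isCC (G := G) hs'S
    have p1 : ¬ s' β (h₁⁻¹ β) := hforb' (β, h₁⁻¹ β) (by simp) (Ne.symm hbinv)
    have hβCs : ¬ s' (h₁⁻¹ β) β := fun q => p1 (hs'cc.1.symm q)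
    obtain ⟨k, hkG, hkm, hks, -⟩ := ample htrans habund hs'S (h₁⁻¹ β)
    have hgk : g * k ∈ G := mul_mem hg hkG
    have h₂eq : aconj h (g * k) = aconj h₁ k := by
      rw [hh₁def]; exact (aconj_aconj h g k).symm
    have hkβ : k β = β := fix_out hks hβCs
    have hclassmove : ∀ z, s' (h₁⁻¹ β) z → ¬ s' (h₁⁻¹ β) (h₁ z) := by
      intro z hz hcon
      have h4 := (cc_inv_iff hs'cc hh₁G).mpr hz
      rw [apply_inv_self'] at h4
      exact p1 (hs'cc.1.trans h4 (hs'cc.1.symm hcon))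
    have hh₁βout : ¬ s' (h₁⁻¹ β) (h₁ β) := opp_not_in_class' hs'cc hb1 hβCs
    have hq2 : (aconj h (g * k)) β ≠ β := by
      rw [h₂eq, aconj_apply, hkβ, fix_out_inv hks hh₁βout]
      exact hb1
    have hc2' : (aconj h (g * k)) γ₂ ≠ γ₂ := by
      rw [h₂eq, aconj_apply]
      by_cases hzC : s' (h₁⁻¹ β) γ₂
      · have hkγ : s' (h₁⁻¹ β) (k γ₂) := supp_pres hks hzC
        have hout : ¬ s' (h₁⁻¹ β) (h₁ (k γ₂)) := hclassmove _ hkγ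
        rw [fix_out_inv hks hout]
        intro hcon
        exact hout (by rw [hcon]; exact hzC)
      · rw [fix_out hks hzC]
        by_cases hhzC : s' (h₁⁻¹ β) (h₁ γ₂)
        · intro hcon
          have hmem : s' (h₁⁻¹ β) (k⁻¹ (h₁ γ₂)) := supp_pres_inv hks hhzC
          rw [hcon] at hmem
          exact hzC hmem
        · rw [fix_out_inv hks hhzC]
          exact c21
    have hval : (aconj h₁ k) β = h₁ β := by
      rw [aconj_apply, hkβ, fix_out_inv hks hh₁βout]
    have hvalinv : (aconj h₁ k)⁻¹ β = k⁻¹ (h₁⁻¹ β) := by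
      rw [aconj_inv, aconj_apply, hkβ]
    rcases pin hlat htrans habund hnomin hh hgk hf hq2 c1 hc2' with hx | hx | hx
    · rw [hx] at hmid
      exact hbinv hmid.symm
    · rw [h₂eq, hval] at hx
      have hcomb : h₁⁻¹ β = h₁ β := hmid.symm.trans hx
      exact h_sq_ne hb1 hcomb.symm
    · rw [h₂eq, hvalinv] at hx
      have hcomb : h₁⁻¹ β = k⁻¹ (h₁⁻¹ β) := hmid.symm.trans hx
      have h2 : k (h₁⁻¹ β) = k (k⁻¹ (h₁⁻¹ β)) := congrArg (fun z => k z) hcomb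
      rw [apply_inv_self'] at h2
      exact hkm h2

end Fix

section Main

set_option linter.unusedSectionVars false

variable {Ω : Type*} [LinearOrder Ω] {G : Subgroup (Ω ≃o Ω)}

theorem smaller_double_centralizer' (G : Subgroup (Ω ≃o Ω)) (hlat : SublatticeClosed G)
    (htrans : IsTransitive G) (habund : Abundant G) (hnomin : SpineNoMin G) :
    ∀ Δ : Set Ω, InT G Δ → ∀ h ∈ Qset G Δ,
      ∃ h' ∈ rst G Δ, cent2 G (Wset G h') ≠ {1} ∧
        cent2 G (Wset G h') ⊂ cent2 G (Wset G h) := by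
  intro Δ hInT h hQ
  obtain ⟨⟨hhG, hsuppΔ⟩, α, hαΔ, hΔcl⟩ := hQ
  obtain ⟨r, hrS, δ₀, hΔr⟩ := hInT
  -- h moves α
  have hα : h α ≠ α := by
    intro hcon
    have hsingle : ∀ γ ∈ Δ, γ = α := by
      intro γ hγ
      rw [hΔcl] at hγ
      exact (hγ Eq eq_isCC hcon.symm).symm
    obtain ⟨a₀, b₀, hab₀, hreq⟩ := hrS
    obtain ⟨p, hp, hpa⟩ := htrans a₀ δ₀
    have hrcc : IsConvexCongruence G r := by
      rw [hreq]; exact vcong_isCC a₀ b₀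
    have hδ₀Δ : δ₀ ∈ Δ := by rw [hΔr]; exact hrcc.1.refl δ₀
    have h2 : r (p a₀) (p b₀) := hrcc.2.2 p hp a₀ b₀ (by rw [hreq]; exact vcong_pair a₀ b₀)
    rw [hpa] at h2
    have hpbΔ : p b₀ ∈ Δ := by rw [hΔr]; exact h2
    have h3 : p b₀ = δ₀ := by rw [hsingle _ hpbΔ, hsingle _ hδ₀Δ]
    exact hab₀ (oi_injective p (hpa.trans h3.symm))
  have hκS : SpineMem G (Vcong G α (h α)) := ⟨α, h α, Ne.symm hα, rfl⟩
  have hκcc : IsConvexCongruence G (Vcong G α (h α)) := vcong_isCC α (h α)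
  obtain ⟨r', hr'S, hr'le, hr'ne⟩ := hnomin _ hκS
  have hr'cc := spine_isCC (G := G) hr'S
  -- the smaller element h'
  obtain ⟨h', hh'G, hh'm, hh's, hh'V⟩ := ample htrans habund hr'S α
  have hΔ'Δ : ∀ z, r' α z → z ∈ Δ := by
    intro z hz
    rw [hΔcl]
    exact hr'le _ _ hz
  have hsuppΔ' : supp h' ⊆ Δ := fun z hz => hΔ'Δ z (hh's hz)
  -- f ∈ C(W_h) fixes the r'-class of α pointwise
  have hfixf : ∀ f ∈ cent G (Wset G h), ∀ σ, r' α σ → f σ = σ := by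
    intro f hf σ hσ
    by_cases hσα : σ = α
    · subst hσα
      exact fix_lemma hlat htrans habund hnomin hhG hα hf (Or.inl hα)
    · refine fix_lemma hlat htrans habund hnomin hhG hα hf (Or.inr ⟨α, hα, fun e => hσα e.symm, ?_, ?_⟩)
      · exact relLe_trans (vcong_min hr'cc (hr'cc.1.symm hσ)) hr'le
      · intro hcon
        have h5 : relLe (Vcong G α (h α)) r' := by
          rw [← hcon]
          exact vcong_min hr'cc (hr'cc.1.symm hσ)
        exact hr'ne (relLe_antisymm hr'le h5)
  -- C(W_h) ⊆ C(W_{h'})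
  have hsub : ∀ f ∈ cent G (Wset G h), f ∈ cent G (Wset G h') := by
    intro f hf
    refine ⟨hf.1, ?_⟩
    intro w hw
    rcases w_supp hr'cc (fun z hz => hh's hz) hw with rfl | hW
    · rw [one_mul, mul_one]
    · exact fixes_superset_commute (fun σ hσ => hfixf f hf σ hσ) (fun z hz => hW z hz)
  have hc2sub : cent2 G (Wset G h') ⊆ cent2 G (Wset G h) := by
    intro x hx
    exact ⟨hx.1, fun s hs => hx.2 s (hsub s hs)⟩
  -- h' belongs to its own double centralizer
  have hh'c2 : h' ∈ cent2 G (Wset G h') := by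
    refine ⟨hh'G, ?_⟩
    intro f hf
    have hfix : ∀ σ ∈ supp h', f σ = σ := by
      intro σ hσ
      exact fix_lemma hlat htrans habund hnomin hh'G hh'm hf (Or.inl hσ)
    exact (fixes_superset_commute hfix (subset_refl (supp h'))).symm
  -- h belongs to its own double centralizer
  have hhc2 : h ∈ cent2 G (Wset G h) := by
    refine ⟨hhG, ?_⟩
    intro f hf
    have hfix : ∀ σ ∈ supp h, f σ = σ := by
      intro σ hσ
      exact fix_lemma hlat htrans habund hnomin hhG hα hf (Or.inl hσ)
    exact (fixes_superset_commute hfix (subset_refl (supp h))).symm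
  -- h does not belong to the double centralizer of W_{h'}
  obtain ⟨f₀, hf₀G, hf₀m, hf₀s, -⟩ := ample htrans habund hr'S (h α)
  have hdisj : ∀ z, r' (h α) z → ¬ r' α z := by
    intro z h1 h2
    have h3 : r' α (h α) := hr'cc.1.trans h2 (hr'cc.1.symm h1)
    have h4 : relLe (Vcong G α (h α)) r' := vcong_min hr'cc h3
    exact hr'ne (relLe_antisymm hr'le h4)
  have hf₀cent : f₀ ∈ cent G (Wset G h') := by
    refine ⟨hf₀G, ?_⟩
    intro w hw
    rcases w_supp hr'cc (fun z hz => hh's hz) hw with rfl | hW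
    · rw [one_mul, mul_one]
    · apply disjoint_supp_commute
      intro z hz1 hz2
      exact hdisj z (hf₀s hz2) (hW z hz1)
  have hhnot : h ∉ cent2 G (Wset G h') := by
    intro hmem
    have hcomm := hmem.2 f₀ hf₀cent
    have h1 := forall_of_commute hcomm α
    have hf₀α : f₀ α = α := fix_out hf₀s (fun hc => hdisj α hc (hr'cc.1.refl α))
    rw [hf₀α] at h1
    exact hf₀m h1
  refine ⟨h', ⟨hh'G, hsuppΔ'⟩, ?_, ?_⟩
  · intro hcon
    have : h' ∈ ({1} : Set (Ω ≃o Ω)) := hcon ▸ hh'c2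
    have h1 : h' = 1 := this
    rw [h1] at hh'm
    exact hh'm rfl
  · rw [Set.ssubset_iff_of_subset hc2sub]
    exact ⟨h, hhc2, hhnot⟩

end Main
/-- (Corollary 4.5 of the paper.) -/
theorem smaller_double_centralizer {Ω : Type*} [LinearOrder Ω]
    (G : Subgroup (Ω ≃o Ω)) (hlat : SublatticeClosed G)
    (htrans : IsTransitive G) (habund : Abundant G) (hnomin : SpineNoMin G) :
    ∀ Δ : Set Ω, InT G Δ → ∀ h ∈ Qset G Δ,
      ∃ h' ∈ rst G Δ, cent2 G (Wset G h') ≠ {1} ∧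
        cent2 G (Wset G h') ⊂ cent2 G (Wset G h) := by
  exact smaller_double_centralizer' G hlat htrans habund hnomin

end LPerm
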